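/- Let g be a natural number with g ≥ 1 and α ∈ (0,1) a real number. For 1 ≤ k ≤ g define b_k = Σ_{j=1}^k α/(g·(1+j)). For a real number p define i(p) = #{k ∈ {1,…,g} : p > b_k} and E(p) = g/(α·(i(p)+1)). Define T : ℝ → ℝ by T(z) = g/⌈g/z⌉ if z ≥ 1 and T(z) = 0 if z < 1, where ⌈·⌉ denotes the ceiling. If X is uniformly distributed on (0,1], then E[T(α·E(X))] ≤ α. -/

import Mathlib

/-!
The e-value `E` is a step function of the p-value: on `(b k, b (k + 1)]` with `k < g` it equals
`g / (α (k + 1))`, and `T` leaves `α E = g / (k + 1)` unchanged; beyond `b g` we get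
`α E = g / (g + 1) < 1`, which `T` sends to `0`. Since `b (k + 1) - b k = α / (g (k + 2))`, the
integral is the telescoping sum `α ∑_{k < g} (1 / (k + 1) - 1 / (k + 2)) = α (1 - 1 / (g + 1))`.
-/

open MeasureTheory Finset

noncomputable section

def ebhTruncation (g : ℕ) (z : ℝ) : ℝ :=
  if 1 ≤ z then (g : ℝ) / ((⌈(g : ℝ) / z⌉ : ℤ) : ℝ) else 0

theorem ebhTruncation_of_lt_one {g : ℕ} {z : ℝ} (hz : z < 1) : ebhTruncation g z = 0 :=
  if_neg hz.not_ge

theorem ebhTruncation_div_natCast {g n : ℕ} (hn : 0 < n) (hng : n ≤ g) :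
    ebhTruncation g (g / n) = g / n := by
  have hn' : (0 : ℝ) < n := by exact_mod_cast hn
  have hg : (g : ℝ) ≠ 0 := by exact_mod_cast (hn.trans_le hng).ne'
  have h1 : 1 ≤ (g : ℝ) / n := (one_le_div hn').2 (by exact_mod_cast hng)
  rw [ebhTruncation, if_pos h1, div_div_cancel₀ hg, Int.ceil_natCast, Int.cast_natCast]

def boostThreshold (α : ℝ) (g k : ℕ) : ℝ :=
  ∑ j ∈ Icc 1 k, α / (g * (1 + (j : ℝ)))

section boostThreshold

variable {α : ℝ} {g : ℕ}

@[simp]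
theorem boostThreshold_zero : boostThreshold α g 0 = 0 := by
  simp [boostThreshold]

theorem boostThreshold_succ (k : ℕ) :
    boostThreshold α g (k + 1) = boostThreshold α g k + α / (g * (k + 2)) := by
  rw [boostThreshold, boostThreshold, sum_Icc_succ_top (by omega)]
  push_cast
  ring

theorem boostThreshold_monotone (hα : 0 ≤ α) : Monotone (boostThreshold α g) :=
  monotone_nat_of_le_succ fun k => by rw [boostThreshold_succ]; bound

theorem boostThreshold_le (hα : 0 ≤ α) : boostThreshold α g g ≤ α := by
  rcases Nat.eq_zero_or_pos g with rfl | hg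
  · simpa using hα
  have hg' : (0 : ℝ) < g := by exact_mod_cast hg
  calc boostThreshold α g g ≤ ∑ _j ∈ Icc 1 g, α / g :=
        sum_le_sum fun j _ => div_le_div_of_nonneg_left hα hg' (le_mul_of_one_le_right hg'.le (by bound))
    _ = α := by simp [mul_div_cancel₀ _ hg'.ne']

theorem sum_div_succ_mul_boostThreshold_sub :
    ∑ k ∈ range g, (g : ℝ) / (k + 1) * (boostThreshold α g (k + 1) - boostThreshold α g k) =
      α * (1 - 1 / (g + 1)) := by
  have hterm : ∀ k ∈ range g, (g : ℝ) / (k + 1) * (boostThreshold α g (k + 1) - boostThreshold α g k) =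
      α * (1 / ((k : ℕ) + 1 : ℝ) - 1 / (((k + 1 : ℕ) : ℝ) + 1)) := by
    intro k hk
    have hg : (g : ℝ) ≠ 0 := by exact_mod_cast (Nat.zero_lt_of_lt (mem_range.1 hk)).ne'
    rw [boostThreshold_succ]
    push_cast
    field_simp
    ring
  rw [sum_congr rfl hterm, ← mul_sum, sum_range_sub' (fun k : ℕ => 1 / ((k : ℝ) + 1))]
  simp

end boostThreshold

theorem card_filter_lt_of_mem_Ioc {β : Type*} [LinearOrder β] {b : ℕ → β} (hb : Monotone b) {n k : ℕ}
    (hk : k ≤ n) {x : β} (hx : x ∈ Set.Ioc (b k) (b (k + 1))) : #{m ∈ Icc 1 n | b m < x} = k := by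
  have : {m ∈ Icc 1 n | b m < x} = Icc 1 k := by
    ext m
    simp only [mem_filter, mem_Icc]
    refine ⟨fun ⟨⟨h1, _⟩, hm⟩ => ⟨h1, ?_⟩, fun ⟨h1, hm⟩ => ⟨⟨h1, hm.trans hk⟩, (hb hm).trans_lt hx.1⟩⟩
    exact Nat.lt_succ_iff.1 (hb.reflect_lt (hm.trans_le hx.2))
  simp [this]

theorem card_filter_lt_of_lt {β : Type*} [LinearOrder β] {b : ℕ → β} (hb : Monotone b) {n : ℕ} {x : β}
    (hx : b n < x) : #{m ∈ Icc 1 n | b m < x} = n := by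
  rw [filter_true_of_mem fun m hm => (hb (mem_Icc.1 hm).2).trans_lt hx]
  simp

section StepFunction

variable {f : ℝ → ℝ}

theorem intervalIntegrable_of_eqOn_Ioc {a b c : ℝ} (hab : a ≤ b)
    (h : Set.EqOn f (fun _ => c) (Set.Ioc a b)) : IntervalIntegrable f volume a b :=
  (intervalIntegrable_iff_integrableOn_Ioc_of_le hab).2 <|
    (integrableOn_congr_fun h measurableSet_Ioc).2 (integrableOn_const measure_Ioc_lt_top.ne)

theorem intervalIntegral_eq_of_eqOn_Ioc {a b c : ℝ} (hab : a ≤ b)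
    (h : Set.EqOn f (fun _ => c) (Set.Ioc a b)) : ∫ x in a..b, f x = c * (b - a) := by
  rw [intervalIntegral.integral_of_le hab, setIntegral_congr_fun measurableSet_Ioc h,
    setIntegral_const, measureReal_def, Real.volume_Ioc, ENNReal.toReal_ofReal (sub_nonneg.2 hab),
    smul_eq_mul, mul_comm]

variable {a c : ℕ → ℝ} {n : ℕ}

theorem intervalIntegrable_of_eqOn_Ioc_succ (ha : Monotone a)
    (h : ∀ k < n, Set.EqOn f (fun _ => c k) (Set.Ioc (a k) (a (k + 1)))) :
    IntervalIntegrable f volume (a 0) (a n) :=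
  IntervalIntegrable.trans_iterate fun k hk => intervalIntegrable_of_eqOn_Ioc (ha k.le_succ) (h k hk)

theorem intervalIntegral_eq_sum_of_eqOn_Ioc_succ (ha : Monotone a)
    (h : ∀ k < n, Set.EqOn f (fun _ => c k) (Set.Ioc (a k) (a (k + 1)))) :
    ∫ x in a 0..a n, f x = ∑ k ∈ range n, c k * (a (k + 1) - a k) := by
  rw [← intervalIntegral.sum_integral_adjacent_intervals fun k hk =>
    intervalIntegrable_of_eqOn_Ioc (ha k.le_succ) (h k hk)]
  exact sum_congr rfl fun k hk => intervalIntegral_eq_of_eqOn_Ioc (ha k.le_succ) (h k (mem_range.1 hk))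

end StepFunction

end

theorem stmt_12_general (g : ℕ) (α : ℝ) (hα : α ∈ Set.Ioo (0 : ℝ) 1)
    (b : ℕ → ℝ) (hbdef : ∀ k, b k = ∑ j ∈ Finset.Icc 1 k, α / (g * (1 + (j : ℝ))))
    (i : ℝ → ℕ) (hidef : ∀ p : ℝ, i p = ((Finset.Icc 1 g).filter (fun k => b k < p)).card)
    (E : ℝ → ℝ) (hEdef : ∀ p : ℝ, E p = (g : ℝ) / (α * ((i p : ℝ) + 1)))
    (T : ℝ → ℝ)
    (hT : ∀ z : ℝ, T z = if 1 ≤ z then (g : ℝ) / ((⌈(g : ℝ) / z⌉ : ℤ) : ℝ) else 0) :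
    ∫ x in Set.Ioc (0 : ℝ) 1, T (α * E x) ≤ α := by
  obtain ⟨hα0, hα1⟩ := hα
  obtain rfl : b = boostThreshold α g := funext hbdef
  obtain rfl : T = ebhTruncation g := funext hT
  have hb := boostThreshold_monotone (g := g) hα0.le
  have hαE : ∀ x, α * E x = g / (i x + 1) := fun x => by
    rw [hEdef]
    field_simp
  have hpiece : ∀ k < g, Set.EqOn (fun x => ebhTruncation g (α * E x)) (fun _ => g / (k + 1))
      (Set.Ioc (boostThreshold α g k) (boostThreshold α g (k + 1))) := fun k hk x hx => by
    dsimp only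
    rw [hαE, hidef, card_filter_lt_of_mem_Ioc hb hk.le hx]
    exact_mod_cast ebhTruncation_div_natCast k.succ_pos hk
  have htail : Set.EqOn (fun x => ebhTruncation g (α * E x)) (fun _ => 0)
      (Set.Ioc (boostThreshold α g g) 1) := fun x hx => by
    dsimp only
    rw [hαE, hidef, card_filter_lt_of_lt hb hx.1]
    exact ebhTruncation_of_lt_one ((div_lt_one (by positivity)).2 (lt_add_one _))
  have hbg : boostThreshold α g g ≤ 1 := (boostThreshold_le hα0.le).trans hα1.le
  rw [← intervalIntegral.integral_of_le zero_le_one, ← boostThreshold_zero (α := α) (g := g),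
    ← intervalIntegral.integral_add_adjacent_intervals (intervalIntegrable_of_eqOn_Ioc_succ hb hpiece)
      (intervalIntegrable_of_eqOn_Ioc hbg htail),
    intervalIntegral_eq_sum_of_eqOn_Ioc_succ hb hpiece, intervalIntegral_eq_of_eqOn_Ioc hbg htail,
    sum_div_succ_mul_boostThreshold_sub]
  nlinarith [show (0 : ℝ) < 1 / (g + 1) by positivity]

theorem stmt_12 (g : ℕ) (hg : 1 ≤ g) (α : ℝ) (hα : α ∈ Set.Ioo (0 : ℝ) 1)
    (b : ℕ → ℝ) (hbdef : ∀ k, b k = ∑ j ∈ Finset.Icc 1 k, α / (g * (1 + (j : ℝ))))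
    (i : ℝ → ℕ) (hidef : ∀ p : ℝ, i p = ((Finset.Icc 1 g).filter (fun k => b k < p)).card)
    (E : ℝ → ℝ) (hEdef : ∀ p : ℝ, E p = (g : ℝ) / (α * ((i p : ℝ) + 1)))
    (T : ℝ → ℝ)
    (hT : ∀ z : ℝ, T z = if 1 ≤ z then (g : ℝ) / ((⌈(g : ℝ) / z⌉ : ℤ) : ℝ) else 0) :
    ∫ x in Set.Ioc (0 : ℝ) 1, T (α * E x) ≤ α :=
  stmt_12_general g α hα b hbdef i hidef E hEdef T hT
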